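/- Let p ∈ (0,1), k̃ ∈ ℝ, K > 0, and define f(t,x,y) = e^{k̃ t}(x + y)^p on ℝ₊³. Then for every y > 0, f satisfies: sup over π ∈ ℝ of [ π b_L f_x + (ρ b_L σ_I/σ_L) y f_y + (σ_L² π²/2) f_{xx} + π ρ σ_I σ_L y f_{xy} + (ρ² σ_I²/2) y² f_{yy} ] = (p/(1−p)) · (b_L²/(2σ_L²)) f(t,x,y), for all t ≥ 0, x ≥ 0 with x + y > 0. -/

import Mathlib

/-!
Since `f t x y = φ (x + y)` with `φ s = e^{k t} s^p`, every partial derivative in the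
Hamiltonian is `φ'` or `φ''` at `s = x + y`. The Hamiltonian is then a quadratic in `π` with
leading coefficient `σ_L² φ'' / 2 < 0`, and completing the square shows that its maximum is
`-b_L² φ'² / (2 σ_L² φ'')`: the `y`-dependent terms cancel at the maximiser. For the power
function, `φ'² / φ'' = p φ / (p - 1)`.
-/

theorem isGreatest_range_quadratic_of_neg {a : ℝ} (ha : a < 0) (b c : ℝ) :
    IsGreatest (Set.range fun x => a * x ^ 2 + b * x + c) (c - b ^ 2 / (4 * a)) := by
  have hsq : ∀ x, a * x ^ 2 + b * x + c = a * (x + b / (2 * a)) ^ 2 + (c - b ^ 2 / (4 * a)) := by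
    intro x
    field_simp [ha.ne]
    ring
  refine ⟨⟨-(b / (2 * a)), by simp only [hsq]; ring⟩, ?_⟩
  rintro _ ⟨x, rfl⟩
  simp only [hsq]
  nlinarith [sq_nonneg (x + b / (2 * a))]

theorem sSup_hamiltonian_eq (bL σL σI ρ y D₁ D₂ : ℝ) (hσL : σL ≠ 0) (hD₂ : D₂ < 0) :
    sSup {z : ℝ | ∃ π : ℝ,
        z = π * bL * D₁ + ρ * bL * σI / σL * y * D₁ + σL ^ 2 * π ^ 2 / 2 * D₂
          + π * ρ * σI * σL * y * D₂ + ρ ^ 2 * σI ^ 2 / 2 * y ^ 2 * D₂}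
      = -(bL ^ 2 * D₁ ^ 2 / (2 * σL ^ 2 * D₂)) := by
  have ha : σL ^ 2 * D₂ / 2 < 0 :=
    div_neg_of_neg_of_pos (mul_neg_of_pos_of_neg (by positivity) hD₂) two_pos
  have hset : {z : ℝ | ∃ π : ℝ,
        z = π * bL * D₁ + ρ * bL * σI / σL * y * D₁ + σL ^ 2 * π ^ 2 / 2 * D₂
          + π * ρ * σI * σL * y * D₂ + ρ ^ 2 * σI ^ 2 / 2 * y ^ 2 * D₂}
      = Set.range fun π => σL ^ 2 * D₂ / 2 * π ^ 2 + (bL * D₁ + ρ * σI * σL * y * D₂) * π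
          + (ρ * bL * σI / σL * y * D₁ + ρ ^ 2 * σI ^ 2 / 2 * y ^ 2 * D₂) := by
    ext z
    exact exists_congr fun π => by rw [eq_comm]; ring_nf
  rw [hset, (isGreatest_range_quadratic_of_neg ha _ _).csSup_eq]
  field_simp [hD₂.ne]
  ring

theorem deriv_const_mul_rpow (E p : ℝ) :
    deriv (fun s : ℝ => E * s ^ p) = fun s => E * p * s ^ (p - 1) := by
  funext s
  rw [deriv_const_mul_field, Real.deriv_rpow_const, mul_assoc]

theorem barrier_function_supersolution_identity_general
    (p k bL σL σI ρ : ℝ) (hp : p ∈ Set.Ioo (0:ℝ) 1)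
    (hσL : 0 < σL)
    (f : ℝ → ℝ → ℝ → ℝ)
    (hf : ∀ t x y : ℝ, f t x y = Real.exp (k * t) * (x + y) ^ p)
    (t x y : ℝ) (hxy : 0 < x + y) :
    sSup {z : ℝ | ∃ π : ℝ,
        z = π * bL * deriv (fun x' => f t x' y) x
          + ρ * bL * σI / σL * y * deriv (fun y' => f t x y') y
          + σL ^ 2 * π ^ 2 / 2 * deriv (fun x' => deriv (fun x'' => f t x'' y) x') x
          + π * ρ * σI * σL * y * deriv (fun y' => deriv (fun x' => f t x' y') x) y
          + ρ ^ 2 * σI ^ 2 / 2 * y ^ 2 * deriv (fun y' => deriv (fun y'' => f t x y'') y') y}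
      = p / (1 - p) * (bL ^ 2 / (2 * σL ^ 2)) * f t x y := by
  obtain ⟨hp₀, hp₁⟩ := hp
  set E := Real.exp (k * t)
  set φ : ℝ → ℝ := fun s => E * s ^ p with hφ
  have hft : f t = fun x y => φ (x + y) := by
    funext x y
    exact hf t x y
  simp only [hft, deriv_comp_add_const, deriv_comp_const_add]
  set s := x + y
  have hφ' : deriv φ = fun s => E * p * s ^ (p - 1) := deriv_const_mul_rpow E p
  have hD₁ : deriv φ s = E * p * s ^ (p - 1) := by rw [hφ']
  have hD₂ : deriv (deriv φ) s = E * p * (p - 1) * s ^ (p - 1 - 1) := by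
    rw [hφ', deriv_const_mul_rpow]
  have hD₂_neg : deriv (deriv φ) s < 0 := by
    rw [hD₂]
    exact mul_neg_of_neg_of_pos
      (mul_neg_of_pos_of_neg (by positivity) (by linarith)) (Real.rpow_pos_of_pos hxy _)
  rw [sSup_hamiltonian_eq _ _ _ _ _ _ _ hσL.ne' hD₂_neg, hD₂, hD₁,
    Real.rpow_sub_one hxy.ne' (p - 1), Real.rpow_sub_one hxy.ne' p, hφ]
  have hsp : 0 < s ^ p := Real.rpow_pos_of_pos hxy p
  field_simp [hxy.ne', hsp.ne', (Real.exp_pos (k * t)).ne', hp₀.ne', (sub_neg.2 hp₁).ne]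
  ring

theorem barrier_function_supersolution_identity
    (p k bL σL σI ρ : ℝ) (hp : p ∈ Set.Ioo (0:ℝ) 1)
    (hσL : 0 < σL) (hσI : 0 < σI) (hρ : ρ ∈ Set.Ioo (-1:ℝ) 1)
    (f : ℝ → ℝ → ℝ → ℝ)
    (hf : ∀ t x y : ℝ, f t x y = Real.exp (k * t) * (x + y) ^ p)
    (t x y : ℝ) (ht : 0 ≤ t) (hx : 0 ≤ x) (hy : 0 < y) (hxy : 0 < x + y) :
    sSup {z : ℝ | ∃ π : ℝ,
        z = π * bL * deriv (fun x' => f t x' y) x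
          + ρ * bL * σI / σL * y * deriv (fun y' => f t x y') y
          + σL ^ 2 * π ^ 2 / 2 * deriv (fun x' => deriv (fun x'' => f t x'' y) x') x
          + π * ρ * σI * σL * y * deriv (fun y' => deriv (fun x' => f t x' y') x) y
          + ρ ^ 2 * σI ^ 2 / 2 * y ^ 2 * deriv (fun y' => deriv (fun y'' => f t x y'') y') y}
      = p / (1 - p) * (bL ^ 2 / (2 * σL ^ 2)) * f t x y :=
  barrier_function_supersolution_identity_general p k bL σL σI ρ hp hσL f hf t x y hxy
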